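/- For the F^{(α)}-family p(x,ξ) = (1 + α ξ·h(x))^{-1/α} e^{φ(ξ)} with α > 0, the L^{(α)}-divergence of the potential φ equals the Rényi divergence of order α̃ = 1 + α with arguments interchanged: D^{(α)}[ξ : ξ'] = (1/(α̃-1)) log ∫ p(x,ξ')^{α̃} p(x,ξ)^{1-α̃} dμ(x). -/

import Mathlib

/-!
Write `A = 1 + α ξ·h` and `B = 1 + α ξ'·h`. Since `p(ξ)^α = e^{α φ(ξ)} / A`, the Rényi integrand is
`p(ξ')^{1+α} p(ξ)^{-α} = e^{α(φ(ξ') - φ(ξ))} p(ξ') A / B`, and `A / B = 1 + α (ξ - ξ')·h / B` is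
affine in `ξ - ξ'`. Integrating, `∫ p(ξ') = 1` and the second term is `α ⟪Dφ(ξ'), ξ - ξ'⟫` by the
gradient formula, so the Rényi integral is `e^{α(φ(ξ') - φ(ξ))} (1 + α ⟪Dφ(ξ'), ξ - ξ'⟫)`;
taking `(1/α) log` gives the `L^{(α)}`-divergence.
-/

open scoped RealInnerProductSpace
open MeasureTheory

/-- The normalizing integral of the `F^{(α)}`-family. -/
noncomputable def Fint {d : ℕ} {X : Type*} [MeasurableSpace X] (μ : Measure X)
    (α : ℝ) (h : X → EuclideanSpace ℝ (Fin d))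
    (ξ : EuclideanSpace ℝ (Fin d)) : ℝ :=
  ∫ x, (1 + α * ⟪ξ, h x⟫) ^ (-(1/α)) ∂μ

/-- The `F^{(α)}`-potential `φ(ξ) = -log ∫ (1 + α ξ·h)^{-1/α} dμ`. -/
noncomputable def Fpot {d : ℕ} {X : Type*} [MeasurableSpace X] (μ : Measure X)
    (α : ℝ) (h : X → EuclideanSpace ℝ (Fin d))
    (ξ : EuclideanSpace ℝ (Fin d)) : ℝ :=
  -Real.log (Fint μ α h ξ)

/-- The density `p(x,ξ) = (1 + α ξ·h(x))^{-1/α} e^{φ(ξ)}` of the `F^{(α)}`-family. -/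
noncomputable def Fdens {d : ℕ} {X : Type*} [MeasurableSpace X] (μ : Measure X)
    (α : ℝ) (h : X → EuclideanSpace ℝ (Fin d))
    (ξ : EuclideanSpace ℝ (Fin d)) (x : X) : ℝ :=
  (1 + α * ⟪ξ, h x⟫) ^ (-(1/α)) * Real.exp (Fpot μ α h ξ)

theorem MeasureTheory.integral_pos_of_forall_pos {X : Type*} [MeasurableSpace X]
    {μ : Measure X} [NeZero μ] {f : X → ℝ} (hf : ∀ x, 0 < f x) (hint : Integrable f μ) :
    0 < ∫ x, f x ∂μ := by
  rw [integral_pos_iff_support_of_nonneg (fun x => (hf x).le) hint,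
    Function.support_eq_univ fun x => (hf x).ne']
  exact Measure.measure_univ_pos.mpr (NeZero.ne μ)

theorem Real.rpow_mul_exp_rpow {b : ℝ} (hb : 0 ≤ b) (s c t : ℝ) :
    (b ^ s * Real.exp c) ^ t = b ^ (s * t) * Real.exp (c * t) := by
  rw [Real.mul_rpow (Real.rpow_nonneg hb s) (Real.exp_pos c).le, ← Real.rpow_mul hb,
    Real.exp_mul]

section FamilyF

variable {d : ℕ} {X : Type*} [MeasurableSpace X] (μ : Measure X) (α : ℝ)
  (h : X → EuclideanSpace ℝ (Fin d))

theorem Fint_pos [NeZero μ] {ξ : EuclideanSpace ℝ (Fin d)}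
    (hpos : ∀ x, 0 < 1 + α * ⟪ξ, h x⟫)
    (hint : Integrable (fun x => (1 + α * ⟪ξ, h x⟫) ^ (-(1/α))) μ) :
    0 < Fint μ α h ξ :=
  integral_pos_of_forall_pos (fun x => Real.rpow_pos_of_pos (hpos x) _) hint

theorem integral_Fdens [NeZero μ] {ξ : EuclideanSpace ℝ (Fin d)}
    (hpos : ∀ x, 0 < 1 + α * ⟪ξ, h x⟫)
    (hint : Integrable (fun x => (1 + α * ⟪ξ, h x⟫) ^ (-(1/α))) μ) :
    ∫ x, Fdens μ α h ξ x ∂μ = 1 := by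
  unfold Fdens
  rw [integral_mul_const, Fpot, Real.exp_neg, Real.exp_log (Fint_pos μ α h hpos hint)]
  exact mul_inv_cancel₀ (Fint_pos μ α h hpos hint).ne'

theorem Fdens_rpow {ξ : EuclideanSpace ℝ (Fin d)} {x : X} (hpos : 0 < 1 + α * ⟪ξ, h x⟫)
    (t : ℝ) :
    Fdens μ α h ξ x ^ t = (1 + α * ⟪ξ, h x⟫) ^ (-(1/α) * t) * Real.exp (Fpot μ α h ξ * t) :=
  Real.rpow_mul_exp_rpow hpos.le _ _ _

theorem Fdens_pos {ξ : EuclideanSpace ℝ (Fin d)} {x : X} (hpos : 0 < 1 + α * ⟪ξ, h x⟫) :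
    0 < Fdens μ α h ξ x :=
  mul_pos (Real.rpow_pos_of_pos hpos _) (Real.exp_pos _)

theorem Fdens_rpow_mul_Fdens_rpow (hα : α ≠ 0) {ξ ξ' : EuclideanSpace ℝ (Fin d)} {x : X}
    (hpos : 0 < 1 + α * ⟪ξ, h x⟫) (hpos' : 0 < 1 + α * ⟪ξ', h x⟫) :
    Fdens μ α h ξ' x ^ (1 + α) * Fdens μ α h ξ x ^ (1 - (1 + α)) =
      Real.exp (α * (Fpot μ α h ξ' - Fpot μ α h ξ)) *
        (Fdens μ α h ξ' x + α * (⟪ξ - ξ', h x⟫ / (1 + α * ⟪ξ', h x⟫) * Fdens μ α h ξ' x)) := by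
  have hexp : -(1/α) * α = -1 := by field_simp
  have hexp' : -(1/α) * (1 - (1 + α)) = 1 := by field_simp; ring
  rw [Real.rpow_add (Fdens_pos μ α h hpos'), Real.rpow_one, Fdens_rpow μ α h hpos' α,
    Fdens_rpow μ α h hpos, hexp, hexp', Real.rpow_neg_one, Real.rpow_one,
    show α * (Fpot μ α h ξ' - Fpot μ α h ξ) = Fpot μ α h ξ' * α + Fpot μ α h ξ * (1 - (1 + α))
      by ring, Real.exp_add, inner_sub_left]
  field_simp
  ring

theorem integral_Fdens_rpow_mul_Fdens_rpow [NeZero μ] (hα : α ≠ 0)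
    {ξ ξ' g : EuclideanSpace ℝ (Fin d)}
    (hpos : ∀ x, 0 < 1 + α * ⟪ξ, h x⟫) (hpos' : ∀ x, 0 < 1 + α * ⟪ξ', h x⟫)
    (hint' : Integrable (fun x => (1 + α * ⟪ξ', h x⟫) ^ (-(1/α))) μ)
    (hg : ⟪g, ξ - ξ'⟫ =
      ∫ x, (⟪ξ - ξ', h x⟫ / (1 + α * ⟪ξ', h x⟫)) * Fdens μ α h ξ' x ∂μ)
    (hintren : Integrable (fun x =>
      Fdens μ α h ξ' x ^ (1 + α) * Fdens μ α h ξ x ^ (1 - (1 + α))) μ) :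
    ∫ x, Fdens μ α h ξ' x ^ (1 + α) * Fdens μ α h ξ x ^ (1 - (1 + α)) ∂μ =
      Real.exp (α * (Fpot μ α h ξ' - Fpot μ α h ξ)) * (1 + α * ⟪g, ξ - ξ'⟫) := by
  have hsplit := fun x => Fdens_rpow_mul_Fdens_rpow μ α h hα (hpos x) (hpos' x)
  have hdens : Integrable (Fdens μ α h ξ') μ := hint'.mul_const _
  have hscore : Integrable
      (fun x => α * (⟪ξ - ξ', h x⟫ / (1 + α * ⟪ξ', h x⟫) * Fdens μ α h ξ' x)) μ := by
    refine ((hintren.const_mul (Real.exp (α * (Fpot μ α h ξ' - Fpot μ α h ξ)))⁻¹).sub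
      hdens).congr (ae_of_all _ fun x => ?_)
    rw [Pi.sub_apply, hsplit x, inv_mul_cancel_left₀ (Real.exp_pos _).ne', add_sub_cancel_left]
  simp only [hsplit, integral_const_mul, integral_add hdens hscore,
    integral_Fdens μ α h hpos' hint', hg]

end FamilyF

theorem stmt15_general {d : ℕ} {X : Type*} [MeasurableSpace X] (μ : Measure X)
    [IsProbabilityMeasure μ] (α : ℝ) (hα : 0 < α)
    (h : X → EuclideanSpace ℝ (Fin d))
    (Ω : Set (EuclideanSpace ℝ (Fin d)))
    (hpos : ∀ ξ ∈ Ω, ∀ x, 0 < 1 + α * ⟪ξ, h x⟫)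
    (hfin : ∀ ξ ∈ Ω,
      Integrable (fun x => (1 + α * ⟪ξ, h x⟫) ^ (-(1/α))) μ)
    (Dφ : EuclideanSpace ℝ (Fin d) → EuclideanSpace ℝ (Fin d))
    -- the gradient is the expectation of `Z_ξ` (differentiation under the
    -- integral sign):
    (hDφ : ∀ ξ ∈ Ω, ∀ v : EuclideanSpace ℝ (Fin d),
      ⟪Dφ ξ, v⟫ =
        ∫ x, (⟪v, h x⟫ / (1 + α * ⟪ξ, h x⟫)) * Fdens μ α h ξ x ∂μ)
    (hintren : ∀ ξ ∈ Ω, ∀ ξ' ∈ Ω,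
      Integrable (fun x =>
        Fdens μ α h ξ' x ^ (1 + α) * Fdens μ α h ξ x ^ (1 - (1 + α))) μ) :
    ∀ ξ ∈ Ω, ∀ ξ' ∈ Ω,
      (1/α) * Real.log (1 + α * ⟪Dφ ξ', ξ - ξ'⟫) -
          (Fpot μ α h ξ - Fpot μ α h ξ') =
        (1/((1 + α) - 1)) * Real.log
          (∫ x, Fdens μ α h ξ' x ^ (1 + α) *
            Fdens μ α h ξ x ^ (1 - (1 + α)) ∂μ) := by
  intro ξ hξ ξ' hξ'
  have hren := integral_Fdens_rpow_mul_Fdens_rpow μ α h hα.ne' (hpos ξ hξ) (hpos ξ' hξ')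
    (hfin ξ' hξ') (hDφ ξ' hξ' (ξ - ξ')) (hintren ξ hξ ξ' hξ')
  have hT : 0 < 1 + α * ⟪Dφ ξ', ξ - ξ'⟫ := by
    refine pos_of_mul_pos_right (hren ▸ integral_pos_of_forall_pos (fun x => ?_)
      (hintren ξ hξ ξ' hξ')) (Real.exp_pos _).le
    exact mul_pos (Real.rpow_pos_of_pos (Fdens_pos μ α h (hpos ξ' hξ' x)) _)
      (Real.rpow_pos_of_pos (Fdens_pos μ α h (hpos ξ hξ x)) _)
  rw [hren, Real.log_mul (Real.exp_pos _).ne' hT.ne', Real.log_exp, add_sub_cancel_left]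
  field_simp
  ring

/-- for the `F^{(α)}`-family, the `L^{(α)}`-divergence of the
potential equals the Rényi divergence of order `α̃ = 1 + α` with arguments
interchanged. -/
theorem stmt15 {d : ℕ} {X : Type*} [MeasurableSpace X] (μ : Measure X)
    [IsProbabilityMeasure μ] (α : ℝ) (hα : 0 < α)
    (h : X → EuclideanSpace ℝ (Fin d)) (hmeas : Measurable h)
    (hh : ∀ x, ∀ i, 0 < h x i)
    (Ω : Set (EuclideanSpace ℝ (Fin d))) (hΩ : IsOpen Ω) (hconv : Convex ℝ Ω)
    (hpos : ∀ ξ ∈ Ω, ∀ x, 0 < 1 + α * ⟪ξ, h x⟫)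
    (hfin : ∀ ξ ∈ Ω,
      Integrable (fun x => (1 + α * ⟪ξ, h x⟫) ^ (-(1/α))) μ)
    (Dφ : EuclideanSpace ℝ (Fin d) → EuclideanSpace ℝ (Fin d))
    (hgrad : ∀ ξ ∈ Ω, HasGradientAt (Fpot μ α h) (Dφ ξ) ξ)
    -- the gradient is the expectation of `Z_ξ` (differentiation under the
    -- integral sign):
    (hDφ : ∀ ξ ∈ Ω, ∀ v : EuclideanSpace ℝ (Fin d),
      ⟪Dφ ξ, v⟫ =
        ∫ x, (⟪v, h x⟫ / (1 + α * ⟪ξ, h x⟫)) * Fdens μ α h ξ x ∂μ)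
    (hintren : ∀ ξ ∈ Ω, ∀ ξ' ∈ Ω,
      Integrable (fun x =>
        Fdens μ α h ξ' x ^ (1 + α) * Fdens μ α h ξ x ^ (1 - (1 + α))) μ) :
    ∀ ξ ∈ Ω, ∀ ξ' ∈ Ω,
      (1/α) * Real.log (1 + α * ⟪Dφ ξ', ξ - ξ'⟫) -
          (Fpot μ α h ξ - Fpot μ α h ξ') =
        (1/((1 + α) - 1)) * Real.log
          (∫ x, Fdens μ α h ξ' x ^ (1 + α) *
            Fdens μ α h ξ x ^ (1 - (1 + α)) ∂μ) :=
  stmt15_general μ α hα h Ω hpos hfin Dφ hDφ hintren
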